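/- Every geodesic triangle in the hyperbolic plane with all side lengths in [a,b] (0 < a ≤ b) and circumradius at most R has all three altitudes bounded below by the explicit positive constant h₀(a,b,R) = arcsinh((sinh(a)/sinh(b))·sinh(h₁(a,R))), where h₁(a,R) > 0 is the minimal altitude over isosceles triangles inscribed in a circle of radius R with two side lengths equal to a. -/
import Mathlib


open Real

/-- The complete geodesic line of the hyperbolic plane through two points,
described metrically as the set of points collinear with `p` and `q`. -/
def hLine (p q : UpperHalfPlane) : Set UpperHalfPlane :=
  {z | dist p z + dist z q = dist p q ∨ dist p q + dist q z = dist p z ∨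
    dist z p + dist p q = dist z q}

noncomputable section AuxHyp

open UpperHalfPlane

/-- Algebraic identity behind cosh-convexity on a vertical geodesic. -/
lemma hyp_ident (B X M Y cim : ℝ) (hX : 0 < X) (hM : 0 < M) (hY : 0 < Y) (hc : 0 < cim) :
    (B + M ^ 2) / (2 * cim * M) * Real.sinh (Real.log Y - Real.log X) =
      (B + X ^ 2) / (2 * cim * X) * Real.sinh (Real.log Y - Real.log M) +
      (B + Y ^ 2) / (2 * cim * Y) * Real.sinh (Real.log M - Real.log X) := by
  rw [← Real.log_div hY.ne' hX.ne', ← Real.log_div hY.ne' hM.ne',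
    ← Real.log_div hM.ne' hX.ne', Real.sinh_log (by positivity),
    Real.sinh_log (by positivity), Real.sinh_log (by positivity)]
  field_simp
  ring

lemma hyp_between_of_abs (u s v : ℝ) (huv : u ≤ v) (h : |u - s| + |s - v| = |u - v|) :
    u ≤ s ∧ s ≤ v := by
  constructor
  · by_contra h'
    push_neg at h'
    rw [abs_of_pos (by linarith), abs_of_neg (by linarith),
      abs_of_nonpos (by linarith)] at h
    linarith
  · by_contra h'
    push_neg at h'
    rw [abs_of_neg (by linarith), abs_of_pos (by linarith),
      abs_of_nonpos (by linarith)] at h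
    linarith

lemma hyp_re_eq_of_dist_eq_dist_log {x m : ℍ}
    (h : dist x m = dist (Real.log x.im) (Real.log m.im)) : m.re = x.re := by
  have h1 : Real.cosh (dist x m) = ((x.re - m.re) ^ 2 + x.im ^ 2 + m.im ^ 2) /
      (2 * x.im * m.im) := cosh_dist' x m
  have h2 : Real.cosh (dist (Real.log x.im) (Real.log m.im)) =
      (x.im ^ 2 + m.im ^ 2) / (2 * x.im * m.im) := by
    rw [Real.dist_eq, Real.cosh_abs, ← Real.log_div x.im_ne_zero m.im_ne_zero,
      Real.cosh_log (by positivity)]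
    field_simp
  rw [h, h2] at h1
  have hx := x.im_pos
  have hm := m.im_pos
  have hD : (0:ℝ) < 2 * x.im * m.im := by positivity
  have h4 : (x.re - m.re) ^ 2 = 0 := by
    have h5 := (div_left_inj' hD.ne').mp h1.symm
    nlinarith [h5]
  have := pow_eq_zero_iff (n := 2) (by norm_num) |>.mp h4
  linarith [sub_eq_zero.mp this]

/-- cosh-convexity along metric betweenness, for `x`, `y` on a common vertical line. -/
lemma hyp_star_aux (c x m y : ℍ) (hxy : x.re = y.re)
    (h : dist x m + dist m y = dist x y) :
    Real.cosh (dist c m) * Real.sinh (dist x y) ≤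
      Real.cosh (dist c x) * Real.sinh (dist m y) +
      Real.cosh (dist c y) * Real.sinh (dist x m) := by
  set lx := Real.log x.im with hlx
  set lm := Real.log m.im with hlm
  set ly := Real.log y.im with hly
  have t1 : dist lx lm ≤ dist x m := dist_log_im_le x m
  have t2 : dist lm ly ≤ dist m y := dist_log_im_le m y
  have t3 : dist lx ly ≤ dist lx lm + dist lm ly := dist_triangle _ _ _
  have hxyd : dist x y = dist lx ly := dist_of_re_eq hxy
  have E1 : dist x m = dist lx lm := by linarith
  have E2 : dist m y = dist lm ly := by linarith
  have E3 : dist lx lm + dist lm ly = dist lx ly := by linarith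
  have hmx : m.re = x.re := hyp_re_eq_of_dist_eq_dist_log E1
  have hcx : Real.cosh (dist c x) = ((c.re - x.re) ^ 2 + c.im ^ 2 + x.im ^ 2) /
      (2 * c.im * x.im) := cosh_dist' c x
  have hcm : Real.cosh (dist c m) = ((c.re - x.re) ^ 2 + c.im ^ 2 + m.im ^ 2) /
      (2 * c.im * m.im) := by rw [cosh_dist', hmx]
  have hcy : Real.cosh (dist c y) = ((c.re - x.re) ^ 2 + c.im ^ 2 + y.im ^ 2) /
      (2 * c.im * y.im) := by rw [cosh_dist', hxy]
  set B := (c.re - x.re) ^ 2 + c.im ^ 2 with hB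
  rw [hxyd, E1, E2, hcx, hcm, hcy]
  rw [Real.dist_eq, Real.dist_eq, Real.dist_eq] at E3 ⊢
  rcases le_total lx ly with hll | hll
  · obtain ⟨h1, h2⟩ := hyp_between_of_abs lx lm ly hll E3
    rw [abs_sub_comm lx ly, abs_of_nonneg (by linarith : (0:ℝ) ≤ ly - lx),
      abs_sub_comm lm ly, abs_of_nonneg (by linarith : (0:ℝ) ≤ ly - lm),
      abs_sub_comm lx lm, abs_of_nonneg (by linarith : (0:ℝ) ≤ lm - lx)]
    have hid := hyp_ident B x.im m.im y.im c.im x.im_pos m.im_pos y.im_pos c.im_pos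
    linarith [hid]
  · obtain ⟨h1, h2⟩ := hyp_between_of_abs ly lm lx hll (by
      rw [abs_sub_comm ly lm, abs_sub_comm lm lx, abs_sub_comm ly lx]; linarith)
    rw [abs_of_nonneg (by linarith : (0:ℝ) ≤ lx - ly),
      abs_of_nonneg (by linarith : (0:ℝ) ≤ lm - ly),
      abs_of_nonneg (by linarith : (0:ℝ) ≤ lx - lm)]
    have hid := hyp_ident B y.im m.im x.im c.im y.im_pos m.im_pos x.im_pos c.im_pos
    linarith [hid]

lemma hyp_exists_e (x1 x2 y1 y2 : ℝ) (hx : 0 < x2) (hy : 0 < y2) (hne : x1 ≠ y1) :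
    ∃ e : ℝ, (x1 - e) / ((x1 - e) ^ 2 + x2 ^ 2) = (y1 - e) / ((y1 - e) ^ 2 + y2 ^ 2) := by
  have hd : y1 - x1 ≠ 0 := sub_ne_zero_of_ne (Ne.symm hne)
  obtain ⟨k, hk⟩ : ∃ k : ℝ, 2 * k * (y1 - x1) = y1 ^ 2 + y2 ^ 2 - x1 ^ 2 - x2 ^ 2 :=
    ⟨(y1 ^ 2 + y2 ^ 2 - x1 ^ 2 - x2 ^ 2) / (2 * (y1 - x1)), by field_simp⟩
  set ra := Real.sqrt ((x1 - k) ^ 2 + x2 ^ 2) with hra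
  have hrapos : 0 < ra := Real.sqrt_pos.mpr (by positivity)
  have hx2 : (x1 - k) ^ 2 + x2 ^ 2 = ra ^ 2 := (Real.sq_sqrt (by positivity)).symm
  have hy2 : (y1 - k) ^ 2 + y2 ^ 2 = ra ^ 2 := by linear_combination hx2 - hk
  refine ⟨k - ra, ?_⟩
  have hα : (x1 - (k - ra)) ^ 2 + x2 ^ 2 = 2 * ra * (x1 - (k - ra)) := by
    linear_combination hx2
  have hβ : (y1 - (k - ra)) ^ 2 + y2 ^ 2 = 2 * ra * (y1 - (k - ra)) := by
    linear_combination hy2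
  rw [hα, hβ]
  rw [div_eq_div_iff (by rw [← hα]; positivity) (by rw [← hβ]; positivity)]
  ring

lemma hyp_exists_iso (x y : ℍ) : ∃ φ : ℍ → ℍ, Isometry φ ∧ (φ x).re = (φ y).re := by
  by_cases hre : x.re = y.re
  · exact ⟨id, isometry_id, hre⟩
  · obtain ⟨e, he⟩ := hyp_exists_e x.re x.im y.re y.im x.im_pos y.im_pos hre
    set gS : Matrix.SpecialLinearGroup (Fin 2) ℝ :=
      ⟨!![0, -1; 1, 0], by norm_num [Matrix.det_fin_two_of]⟩ with hgS
    have hact : ∀ w : ℍ, ((gS • w : ℍ) : ℂ) = -(w : ℂ)⁻¹ := by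
      intro w
      rw [UpperHalfPlane.specialLinearGroup_apply]
      simp [hgS, neg_div, inv_neg]
    refine ⟨fun z => gS • ((-e) +ᵥ z), ?_, ?_⟩
    · exact (isometry_smul _ gS).comp (isometry_real_vadd (-e))
    · have hco : ∀ w : ℍ, (gS • ((-e) +ᵥ w) : ℍ).re =
          -((w.re - e) / ((w.re - e) ^ 2 + w.im ^ 2)) := by
        intro w
        rw [← UpperHalfPlane.coe_re, hact]
        simp [Complex.inv_re, Complex.normSq_apply, Complex.add_re, Complex.add_im]
        rw [show -e + w.re = w.re - e by ring, ← sq]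
        ring_nf
      rw [hco, hco, he]

/-- cosh-convexity along metric betweenness in the hyperbolic plane. -/
lemma hyp_star (c x m y : ℍ) (h : dist x m + dist m y = dist x y) :
    Real.cosh (dist c m) * Real.sinh (dist x y) ≤
      Real.cosh (dist c x) * Real.sinh (dist m y) +
      Real.cosh (dist c y) * Real.sinh (dist x m) := by
  obtain ⟨φ, hiso, hre⟩ := hyp_exists_iso x y
  have := hyp_star_aux (φ c) (φ x) (φ m) (φ y) hre (by
    rw [hiso.dist_eq, hiso.dist_eq, hiso.dist_eq]; exact h)
  simpa only [hiso.dist_eq] using this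

/-- The explicit lower bound for the altitudes. -/
noncomputable def hyph0 (a : ℝ) : ℝ := min (a / 2) (Real.log (Real.cosh (a / 2)))

lemma hyph0_pos {a : ℝ} (ha : 0 < a) : 0 < hyph0 a :=
  lt_min (by linarith) (Real.log_pos (Real.one_lt_cosh.mpr (by positivity)))

/-- Case where `z` is metrically beyond `r` on the line through `q` and `r`. -/
lemma hyp_beyond {a : ℝ} (ha : 0 < a) (p q r c z : ℍ) {ρ : ℝ}
    (hpr : a ≤ dist p r) (hqr : a ≤ dist q r)
    (hcp : dist c p = ρ) (hcq : dist c q = ρ) (hcr : dist c r = ρ)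
    (hz : dist q r + dist r z = dist q z) :
    hyph0 a ≤ dist p z := by
  set δ := Real.log (Real.cosh (a / 2)) with hδ
  have hδ0 : 0 ≤ δ := Real.log_nonneg (Real.one_le_cosh _)
  rcases le_total (dist r z) (a / 2) with hu | hu
  · refine le_trans (min_le_left _ _) ?_
    have := dist_triangle p z r
    have := dist_comm z r
    linarith [dist_comm r z]
  · have hs := hyp_star c q r z hz
    rw [hcq, hcr] at hs
    have hT : 0 < Real.sinh (dist q r) := Real.sinh_pos_iff.mpr (by linarith)
    have hqz : dist q z = dist q r + dist r z := hz.symm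
    rw [hqz, Real.sinh_add] at hs
    have hρ0 : 0 ≤ ρ := hcp ▸ dist_nonneg
    have hcoshρ : 0 < Real.cosh ρ := Real.cosh_pos _
    have h1 : (Real.cosh ρ * Real.cosh (dist r z)) * Real.sinh (dist q r) ≤
        Real.cosh (dist c z) * Real.sinh (dist q r) := by
      have hcT : 1 ≤ Real.cosh (dist q r) := Real.one_le_cosh _
      have hsu : 0 ≤ Real.sinh (dist r z) := Real.sinh_nonneg_iff.mpr dist_nonneg
      nlinarith [mul_nonneg (mul_nonneg hcoshρ.le (sub_nonneg.mpr hcT)) hsu]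
    have h2 : Real.cosh ρ * Real.cosh (dist r z) ≤ Real.cosh (dist c z) :=
      le_of_mul_le_mul_right h1 hT
    have h3 : Real.cosh (a / 2) ≤ Real.cosh (dist r z) := by
      rw [Real.cosh_le_cosh, abs_of_nonneg (by linarith), abs_of_nonneg dist_nonneg]
      exact hu
    have h4 : Real.cosh (ρ + δ) ≤ Real.cosh (dist c z) := by
      have hsρ : Real.sinh ρ ≤ Real.cosh ρ := le_of_lt (Real.sinh_lt_cosh _)
      have hsδ : 0 ≤ Real.sinh δ := Real.sinh_nonneg_iff.mpr hδ0
      have hexp : Real.cosh δ + Real.sinh δ = Real.cosh (a / 2) := by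
        rw [add_comm, Real.sinh_add_cosh, hδ, Real.exp_log (Real.cosh_pos _)]
      rw [Real.cosh_add]
      nlinarith [mul_nonneg (sub_nonneg.mpr hsρ) hsδ,
        mul_nonneg hcoshρ.le (sub_nonneg.mpr h3)]
    have h5 : ρ + δ ≤ dist c z := by
      have := Real.cosh_le_cosh.mp h4
      rwa [abs_of_nonneg (by linarith), abs_of_nonneg dist_nonneg] at this
    refine le_trans (min_le_right _ _) ?_
    have htri := dist_triangle c p z
    rw [hcp] at htri
    linarith

/-- Case where `z` is metrically between `q` and `r`. -/
lemma hyp_between {a : ℝ} (ha : 0 < a) (p q r c z : ℍ) {ρ : ℝ}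
    (hpq : a ≤ dist p q) (hpr : a ≤ dist p r)
    (hcp : dist c p = ρ) (hcq : dist c q = ρ) (hcr : dist c r = ρ)
    (hz : dist q z + dist z r = dist q r) :
    hyph0 a ≤ dist p z := by
  set δ := Real.log (Real.cosh (a / 2)) with hδ
  have hδ0 : 0 ≤ δ := Real.log_nonneg (Real.one_le_cosh _)
  rcases le_total (dist q z) (a / 2) with hs | hs
  · refine le_trans (min_le_left _ _) ?_
    have := dist_triangle p z q
    linarith [dist_comm z q, dist_comm q z, dist_triangle p z q,
      dist_triangle q z p, dist_triangle p q z,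
      dist_triangle_left p q z, dist_triangle_right p q z]
  rcases le_total (dist z r) (a / 2) with ht | ht
  · refine le_trans (min_le_left _ _) ?_
    linarith [dist_triangle p z r]
  · have hstar := hyp_star c q z r hz
    rw [hcq, hcr] at hstar
    have hqr : dist q r = dist q z + dist z r := hz.symm
    rw [hqr, Real.sinh_add] at hstar
    have hρ0 : 0 ≤ ρ := hcp ▸ dist_nonneg
    have hcoshρ : 0 < Real.cosh ρ := Real.cosh_pos _
    have hK : 1 ≤ Real.cosh (a / 2) := Real.one_le_cosh _
    have hcs : Real.cosh (a / 2) ≤ Real.cosh (dist q z) := by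
      rw [Real.cosh_le_cosh, abs_of_nonneg (by linarith), abs_of_nonneg dist_nonneg]
      exact hs
    have hct : Real.cosh (a / 2) ≤ Real.cosh (dist z r) := by
      rw [Real.cosh_le_cosh, abs_of_nonneg (by linarith), abs_of_nonneg dist_nonneg]
      exact ht
    have hss : 0 < Real.sinh (dist q z) := Real.sinh_pos_iff.mpr (by linarith)
    have hst : 0 < Real.sinh (dist z r) := Real.sinh_pos_iff.mpr (by linarith)
    have hcz : 0 < Real.cosh (dist c z) := Real.cosh_pos _
    have h2 : Real.cosh (dist c z) * Real.cosh (a / 2) ≤ Real.cosh ρ := by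
      have key : (Real.cosh (dist c z) * Real.cosh (a / 2)) *
          (Real.sinh (dist q z) + Real.sinh (dist z r)) ≤
          Real.cosh ρ * (Real.sinh (dist q z) + Real.sinh (dist z r)) := by
        nlinarith [mul_nonneg hcz.le (mul_nonneg (sub_nonneg.mpr hct) hss.le),
          mul_nonneg hcz.le (mul_nonneg (sub_nonneg.mpr hcs) hst.le)]
      have hpos : 0 < Real.sinh (dist q z) + Real.sinh (dist z r) := by linarith
      exact le_of_mul_le_mul_right key hpos
    have h4 : Real.cosh (dist c z + δ) ≤ Real.cosh ρ := by
      have hsρ : Real.sinh (dist c z) ≤ Real.cosh (dist c z) :=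
        le_of_lt (Real.sinh_lt_cosh _)
      have hsδ : 0 ≤ Real.sinh δ := Real.sinh_nonneg_iff.mpr hδ0
      have hexp : Real.cosh δ + Real.sinh δ = Real.cosh (a / 2) := by
        rw [add_comm, Real.sinh_add_cosh, hδ, Real.exp_log (Real.cosh_pos _)]
      rw [Real.cosh_add]
      nlinarith [mul_nonneg (sub_nonneg.mpr hsρ) hsδ]
    have h5 : dist c z + δ ≤ ρ := by
      have := Real.cosh_le_cosh.mp h4
      rwa [abs_of_nonneg (by positivity), abs_of_nonneg (by linarith)] at this
    refine le_trans (min_le_right _ _) ?_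
    have htri := dist_triangle c z p
    rw [dist_comm z p] at htri
    linarith

lemma hyp_core {a : ℝ} (ha : 0 < a) (p q r c : ℍ) {ρ : ℝ}
    (hpq : a ≤ dist p q) (hpr : a ≤ dist p r) (hqr : a ≤ dist q r)
    (hcp : dist c p = ρ) (hcq : dist c q = ρ) (hcr : dist c r = ρ) :
    hyph0 a ≤ Metric.infDist p (hLine q r) := by
  have hne : (hLine q r).Nonempty := ⟨q, Or.inl (by simp)⟩
  by_contra hcon
  push_neg at hcon
  obtain ⟨z, hzmem, hzlt⟩ := (Metric.infDist_lt_iff hne).mp hcon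
  have : hyph0 a ≤ dist p z := by
    rcases hzmem with h | h | h
    · exact hyp_between ha p q r c z hpq hpr hcp hcq hcr h
    · exact hyp_beyond ha p q r c z hpr hqr hcp hcq hcr h
    · refine hyp_beyond ha p r q c z hpq (by rw [dist_comm]; exact hqr) hcp hcr hcq ?_
      rw [dist_comm r q, dist_comm r z] at *
      linarith [dist_comm z q, dist_comm q z, h]
  linarith

end AuxHyp

/-- Lemma 2 of the paper: every geodesic triangle in the hyperbolic
plane with all side lengths in `[a,b]` (`0 < a ≤ b`) and circumradius at most `R`
has all three altitudes (distance from a vertex to the geodesic line through the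
other two vertices) bounded below by a positive constant `h₀` depending only on
`a`, `b`, `R`. -/
theorem stmt3 (a b R : ℝ) (ha : 0 < a) (hab : a ≤ b) (hR : a / 2 ≤ R) :
    ∃ h₀ : ℝ, 0 < h₀ ∧
      ∀ (p q r c : UpperHalfPlane) (ρ : ℝ),
        dist p q ∈ Set.Icc a b → dist p r ∈ Set.Icc a b → dist q r ∈ Set.Icc a b →
        dist c p = ρ → dist c q = ρ → dist c r = ρ → ρ ≤ R →
        h₀ ≤ Metric.infDist p (hLine q r) ∧
        h₀ ≤ Metric.infDist q (hLine p r) ∧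
        h₀ ≤ Metric.infDist r (hLine p q) := by
  refine ⟨hyph0 a, hyph0_pos ha, ?_⟩
  intro p q r c ρ h1 h2 h3 hcp hcq hcr _
  refine ⟨hyp_core ha p q r c h1.1 h2.1 h3.1 hcp hcq hcr, ?_, ?_⟩
  · exact hyp_core ha q p r c (by rw [dist_comm]; exact h1.1) h3.1 h2.1 hcq hcp hcr
  · exact hyp_core ha r p q c (by rw [dist_comm]; exact h2.1)
      (by rw [dist_comm]; exact h3.1) h1.1 hcr hcp hcq
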